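/- arXiv:2012.13381 — 4 statements merged into one kernel-verified Lean document; each statement's English description precedes it below -/
import Mathlib

section
/- Let A be a stable m×m real matrix (all eigenvalues have strictly negative real part) and C a symmetric m×m real matrix. If a symmetric matrix X satisfies (AX + X Aᵀ)/2 = −C, then X = ∫₀^∞ e^{(t/2)A} C e^{(t/2)Aᵀ} dt. -/
/-!
For `f t = e^{ta} x e^{tb}` the Sylvester equation `a x + x b = -c` gives
`f' t = -e^{ta} c e^{tb}`, so integrating over `(0, ∞)` yields `x = ∫₀^∞ e^{ta} c e^{tb} dt` as soon
as `e^{ta}` and `e^{tb}` tend to `0`; the decay is then automatically exponential, because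
`‖e^{Ta}‖ ≤ 1/2` for some `T` and `t ↦ e^{ta}` is a semigroup. For a matrix whose eigenvalues have
negative real part, `e^{tB} v → 0` on every generalized eigenvector `v`, where it is
`e^{tμ}` times a polynomial in `t`, and these vectors span `ℂᵐ`. The theorem is the case
`a = A/2`, `b = Aᵀ/2`.
-/

open Matrix MeasureTheory NormedSpace Filter Topology Set Finset
open scoped Nat

section BanachAlgebra

variable {𝔸 : Type*} [NormedRing 𝔸] [NormedAlgebra ℝ 𝔸] [CompleteSpace 𝔸]

theorem continuous_exp_smul (a : 𝔸) : Continuous fun t : ℝ => exp (t • a) :=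
  continuous_iff_continuousAt.2 fun t => (hasDerivAt_exp_smul_const a t).continuousAt

theorem norm_exp_smul_le_pow_mul (a : 𝔸) (T s : ℝ) (k : ℕ) :
    ‖exp ((k * T + s) • a)‖ ≤ ‖exp (T • a)‖ ^ k * ‖exp (s • a)‖ := by
  let _ : NormedAlgebra ℚ 𝔸 := NormedAlgebra.restrictScalars ℚ ℝ 𝔸
  induction k with
  | zero => simp
  | succ k ih =>
    have hsplit : ((k + 1 : ℕ) * T + s) • a = T • a + (k * T + s) • a := by
      rw [← add_smul]; push_cast; ring_nf
    rw [hsplit, NormedSpace.exp_add_of_commute (((Commute.refl a).smul_left _).smul_right _),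
      pow_succ', mul_assoc]
    exact (norm_mul_le _ _).trans (by gcongr)

theorem exists_norm_exp_smul_le_of_tendsto_zero {a : 𝔸}
    (ha : Tendsto (fun t : ℝ => exp (t • a)) atTop (𝓝 0)) :
    ∃ c ε : ℝ, 0 < ε ∧ ∀ t, 0 ≤ t → ‖exp (t • a)‖ ≤ c * Real.exp (-ε * t) := by
  obtain ⟨T, hT, hT0⟩ := ((ha.norm.eventually
    (gt_mem_nhds (by norm_num : ‖(0 : 𝔸)‖ < 1 / 2))).and (eventually_gt_atTop 0)).exists
  obtain ⟨M, hM⟩ := isCompact_Icc.exists_bound_of_continuousOn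
    ((continuous_exp_smul a).continuousOn (s := Icc 0 T))
  have hM0 : 0 ≤ M := (norm_nonneg _).trans (hM 0 ⟨le_rfl, hT0.le⟩)
  refine ⟨2 * M, Real.log 2 / T, by positivity, fun t ht => ?_⟩
  set k := ⌊t / T⌋₊
  have hkT : k * T ≤ t := (le_div_iff₀ hT0).1 (Nat.floor_le (by positivity))
  have htk : t / T ≤ k + 1 := (Nat.lt_floor_add_one _).le
  have hrpow : (1 / 2 : ℝ) ^ (t / T) = Real.exp (-(Real.log 2 / T) * t) := by
    rw [Real.rpow_def_of_pos (by norm_num), one_div, Real.log_inv]; ring_nf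
  calc ‖exp (t • a)‖ = ‖exp ((k * T + (t - k * T)) • a)‖ := by rw [add_sub_cancel]
    _ ≤ ‖exp (T • a)‖ ^ k * ‖exp ((t - k * T) • a)‖ := norm_exp_smul_le_pow_mul a T _ k
    _ ≤ (1 / 2) ^ k * M := by
        gcongr
        exact hM _ ⟨by linarith, by linarith [(div_le_iff₀ hT0).1 htk]⟩
    _ = 2 * M * (1 / 2 : ℝ) ^ ((k + 1 : ℕ) : ℝ) := by rw [Real.rpow_natCast]; ring
    _ ≤ 2 * M * (1 / 2 : ℝ) ^ (t / T) :=
        mul_le_mul_of_nonneg_left (Real.rpow_le_rpow_of_exponent_ge (by norm_num) (by norm_num)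
          (by push_cast; exact htk)) (by positivity)
    _ = 2 * M * Real.exp (-(Real.log 2 / T) * t) := by rw [hrpow]

theorem integrableOn_exp_smul_mul_mul_exp_smul {a b : 𝔸}
    (ha : Tendsto (fun t : ℝ => exp (t • a)) atTop (𝓝 0))
    (hb : Tendsto (fun t : ℝ => exp (t • b)) atTop (𝓝 0)) (c : 𝔸) :
    IntegrableOn (fun t : ℝ => exp (t • a) * c * exp (t • b)) (Ioi 0) := by
  obtain ⟨Ka, εa, hεa, hKa⟩ := exists_norm_exp_smul_le_of_tendsto_zero ha
  obtain ⟨Kb, εb, hεb, hKb⟩ := exists_norm_exp_smul_le_of_tendsto_zero hb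
  refine Integrable.mono' ((exp_neg_integrableOn_Ioi 0 (add_pos hεa hεb)).const_mul
    (Ka * ‖c‖ * Kb)) ((((continuous_exp_smul a).mul continuous_const).mul
      (continuous_exp_smul b)).aestronglyMeasurable) ?_
  filter_upwards [ae_restrict_mem measurableSet_Ioi] with t ht
  have hta := hKa t (le_of_lt ht)
  have htb := hKb t (le_of_lt ht)
  calc ‖exp (t • a) * c * exp (t • b)‖ ≤ ‖exp (t • a)‖ * ‖c‖ * ‖exp (t • b)‖ := norm_mul₃_le
    _ ≤ Ka * Real.exp (-εa * t) * ‖c‖ * (Kb * Real.exp (-εb * t)) := by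
        gcongr
        exact mul_nonneg ((norm_nonneg _).trans hta) (norm_nonneg c)
    _ = Ka * ‖c‖ * Kb * Real.exp (-(εa + εb) * t) := by
        rw [neg_add, add_mul, Real.exp_add]; ring

theorem integral_exp_smul_mul_mul_exp_smul_of_mul_add_mul_eq_neg {a b c x : 𝔸}
    (ha : Tendsto (fun t : ℝ => exp (t • a)) atTop (𝓝 0))
    (hb : Tendsto (fun t : ℝ => exp (t • b)) atTop (𝓝 0)) (hx : a * x + x * b = -c) :
    ∫ t in Ioi (0 : ℝ), exp (t • a) * c * exp (t • b) = x := by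
  have hderiv (t : ℝ) : HasDerivAt (fun s : ℝ => exp (s • a) * x * exp (s • b))
      (-(exp (t • a) * c * exp (t • b))) t := by
    refine (((hasDerivAt_exp_smul_const a t).mul_const x).mul
      (hasDerivAt_exp_smul_const' b t)).congr_deriv ?_
    rw [← neg_neg c, ← hx]
    noncomm_ring
  have hlim : Tendsto (fun s : ℝ => exp (s • a) * x * exp (s • b)) atTop (𝓝 0) := by
    simpa using (ha.mul_const x).mul hb
  have hftc := integral_Ioi_of_hasDerivAt_of_tendsto' (fun t _ => hderiv t)
    (integrableOn_exp_smul_mul_mul_exp_smul ha hb c).neg hlim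
  simpa [integral_neg] using hftc

end BanachAlgebra

theorem Complex.tendsto_ofReal_pow_mul_exp_mul_atTop_nhds_zero (i : ℕ) {μ : ℂ}
    (hμ : μ.re < 0) :
    Tendsto (fun t : ℝ => (t : ℂ) ^ i * Complex.exp (t * μ)) atTop (𝓝 0) := by
  rw [tendsto_zero_iff_norm_tendsto_zero]
  refine (tendsto_rpow_mul_exp_neg_mul_atTop_nhds_zero i (-μ.re) (neg_pos.2 hμ)).congr' ?_
  filter_upwards [eventually_ge_atTop 0] with t ht
  simp [Complex.norm_exp, abs_of_nonneg ht, mul_comm]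

-- Any normed-algebra structure on matrices would do: the statements below do not mention norms.
attribute [local instance] Matrix.linftyOpNormedAddCommGroup Matrix.linftyOpNormedRing
  Matrix.linftyOpNormedAlgebra

namespace Matrix

variable {n : Type*} [Fintype n] [DecidableEq n]

theorem exp_mulVec_eq_sum_of_pow_mulVec_eq_zero {𝕂 : Type*} [RCLike 𝕂] {N : Matrix n n 𝕂}
    {v : n → 𝕂} {k : ℕ} (hv : N ^ k *ᵥ v = 0) :
    exp N *ᵥ v = ∑ i ∈ range k, (i !⁻¹ : 𝕂) • (N ^ i *ᵥ v) := by
  have hsum := (exp_series_hasSum_exp' (𝕂 := 𝕂) N).map (mulVec.addMonoidHomLeft v)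
    (continuous_id.matrix_mulVec continuous_const)
  refine hsum.unique (hasSum_sum_of_ne_finset_zero (s := range k) fun i hi => ?_) |>.trans ?_
  · rw [Finset.mem_range, not_lt] at hi
    change ((i !⁻¹ : 𝕂) • N ^ i) *ᵥ v = 0
    rw [smul_mulVec, ← Nat.sub_add_cancel hi, pow_add, ← mulVec_mulVec, hv, mulVec_zero, smul_zero]
  · simp [mulVec.addMonoidHomLeft, smul_mulVec]

theorem exp_smul_mulVec_eq_of_pow_mulVec_eq_zero (B : Matrix n n ℂ) (μ : ℂ) {v : n → ℂ} {k : ℕ}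
    (hv : (B - μ • 1) ^ k *ᵥ v = 0) (t : ℝ) :
    exp (t • B) *ᵥ v =
      Complex.exp (t * μ) • ∑ i ∈ range k, ((t : ℂ) ^ i / i !) • ((B - μ • 1) ^ i *ᵥ v) := by
  have hsplit : t • B = ((t : ℂ) * μ) • (1 : Matrix n n ℂ) + (t : ℂ) • (B - μ • 1) := by
    rw [smul_sub, smul_smul, add_sub_cancel, Complex.coe_smul]
  have hscalar : exp (((t : ℂ) * μ) • (1 : Matrix n n ℂ)) = Complex.exp (t * μ) • 1 := by
    rw [← Algebra.algebraMap_eq_smul_one, ← Algebra.algebraMap_eq_smul_one, Complex.exp_eq_exp_ℂ]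
    exact (algebraMap_exp_comm _).symm
  have hcomm : Commute (((t : ℂ) * μ) • (1 : Matrix n n ℂ)) ((t : ℂ) • (B - μ • 1)) :=
    ((Commute.one_left _).smul_left _).smul_right _
  have hv' : ((t : ℂ) • (B - μ • 1)) ^ k *ᵥ v = 0 := by rw [smul_pow, smul_mulVec, hv, smul_zero]
  rw [hsplit, exp_add_of_commute _ _ hcomm, hscalar, smul_mul_assoc, one_mul, smul_mulVec,
    exp_mulVec_eq_sum_of_pow_mulVec_eq_zero hv']
  congr 1
  refine Finset.sum_congr rfl fun i _ => ?_
  rw [smul_pow, smul_mulVec, smul_smul, div_eq_inv_mul]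

theorem tendsto_exp_smul_mulVec_of_mem_maxGenEigenspace (B : Matrix n n ℂ) {μ : ℂ}
    (hμ : μ.re < 0) {v : n → ℂ} (hv : v ∈ Module.End.maxGenEigenspace (toLin' B) μ) :
    Tendsto (fun t : ℝ => exp (t • B) *ᵥ v) atTop (𝓝 0) := by
  obtain ⟨k, hk⟩ := (Module.End.mem_maxGenEigenspace _ _ _).1 hv
  replace hk : (B - μ • 1) ^ k *ᵥ v = 0 := by
    rwa [← toLin'_apply, toLin'_pow, map_sub, map_smul, toLin'_one]
  simp_rw [exp_smul_mulVec_eq_of_pow_mulVec_eq_zero B μ hk, Finset.smul_sum, smul_smul]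
  rw [← Finset.sum_const_zero (s := range k)]
  refine tendsto_finsetSum _ fun i _ => ?_
  have hcoeff := (Complex.tendsto_ofReal_pow_mul_exp_mul_atTop_nhds_zero i hμ).mul_const
    ((i ! : ℂ)⁻¹)
  have hterm := hcoeff.smul_const ((B - μ • 1) ^ i *ᵥ v)
  rw [zero_mul, zero_smul] at hterm
  refine hterm.congr fun t => ?_
  rw [div_eq_mul_inv, mul_assoc, mul_left_comm, mul_comm]

theorem tendsto_exp_smul_mulVec_of_re_neg {B : Matrix n n ℂ}
    (hB : ∀ μ ∈ spectrum ℂ B, μ.re < 0) (v : n → ℂ) :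
    Tendsto (fun t : ℝ => exp (t • B) *ᵥ v) atTop (𝓝 0) := by
  let S : Submodule ℂ (n → ℂ) :=
    { carrier := {w | Tendsto (fun t : ℝ => exp (t • B) *ᵥ w) atTop (𝓝 0)}
      add_mem' := fun ha hb => by simpa [mulVec_add] using ha.add hb
      zero_mem' := by simp
      smul_mem' := fun c w hw => by simpa [mulVec_smul] using hw.const_smul c }
  suffices h : ⊤ ≤ S from h Submodule.mem_top
  rw [← Module.End.iSup_maxGenEigenspace_eq_top (toLin' B)]
  refine iSup_le fun μ w hw => ?_
  rcases eq_or_ne w 0 with rfl | hw0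
  · exact S.zero_mem
  refine tendsto_exp_smul_mulVec_of_mem_maxGenEigenspace B (hB μ ?_) hw
  rw [← spectrum_toLin', ← Module.End.hasEigenvalue_iff_mem_spectrum]
  obtain ⟨k, hk⟩ := (Module.End.mem_maxGenEigenspace _ _ _).1 hw
  exact Module.End.hasEigenvalue_of_hasGenEigenvalue (k := k) <|
    (Submodule.ne_bot_iff _).2 ⟨w, Module.End.mem_genEigenspace_nat.2 hk, hw0⟩

theorem tendsto_exp_smul_of_re_neg {B : Matrix n n ℂ} (hB : ∀ μ ∈ spectrum ℂ B, μ.re < 0) :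
    Tendsto (fun t : ℝ => exp (t • B)) atTop (𝓝 0) := by
  refine tendsto_pi_nhds.2 fun i => tendsto_pi_nhds.2 fun j => ?_
  have := (continuous_apply i).continuousAt.tendsto.comp
    (tendsto_exp_smul_mulVec_of_re_neg hB (Pi.single j 1))
  simpa [mulVec_single, Function.comp_def] using this

theorem tendsto_exp_smul_of_re_neg_map_ofReal {A : Matrix n n ℝ}
    (hA : ∀ μ ∈ spectrum ℂ (A.map Complex.ofReal), μ.re < 0) :
    Tendsto (fun t : ℝ => exp (t • A)) atTop (𝓝 0) := by
  have hmap (t : ℝ) : (exp (t • A)).map Complex.ofReal = exp (t • A.map Complex.ofReal) := by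
    have h := map_exp (Complex.ofRealAm.mapMatrix (m := n))
      (continuous_id.matrix_map Complex.continuous_ofReal) (t • A)
    rw [map_smul] at h
    exact h
  refine tendsto_pi_nhds.2 fun i => tendsto_pi_nhds.2 fun j => ?_
  have := (Complex.continuous_re.tendsto 0).comp <|
    (tendsto_pi_nhds.1 (tendsto_pi_nhds.1 (tendsto_exp_smul_of_re_neg hA) i) j)
  simpa [← hmap, Function.comp_def] using this

end Matrix

theorem stmt6_general {m : ℕ} (A C X : Matrix (Fin m) (Fin m) ℝ)
    (hstable : ∀ μ ∈ spectrum ℂ (A.map (Complex.ofReal)), μ.re < 0)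
    (hlyap : ((1:ℝ)/2) • (A * X + X * Aᵀ) = -C) :
    ∀ i j, X i j = ∫ t in Set.Ioi (0:ℝ),
      (NormedSpace.exp ((t/2) • A) * C * NormedSpace.exp ((t/2) • Aᵀ)) i j := by
  intro i j
  set a : Matrix (Fin m) (Fin m) ℝ := (1 / 2 : ℝ) • A
  set b : Matrix (Fin m) (Fin m) ℝ := (1 / 2 : ℝ) • Aᵀ
  have ha : Tendsto (fun t : ℝ => exp (t • a)) atTop (𝓝 0) := by
    simpa [a, smul_smul, mul_comm, Function.comp_def] using
      (tendsto_exp_smul_of_re_neg_map_ofReal hstable).comp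
        (tendsto_id.atTop_mul_const (by norm_num : (0 : ℝ) < 1 / 2))
  have hb : Tendsto (fun t : ℝ => exp (t • b)) atTop (𝓝 0) := by
    simpa [a, b, ← transpose_smul, exp_transpose, Function.comp_def] using
      (continuous_id.matrix_transpose.tendsto 0).comp ha
  have hsylvester : a * X + X * b = -C := by
    rw [← hlyap, smul_add, smul_mul_assoc, mul_smul_comm]
  calc X i j = (∫ t in Ioi (0 : ℝ), exp (t • a) * C * exp (t • b)) i j :=
        congrArg (fun M => M i j)
          (integral_exp_smul_mul_mul_exp_smul_of_mul_add_mul_eq_neg ha hb hsylvester).symm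
    _ = ∫ t in Ioi (0 : ℝ), (exp (t • a) * C * exp (t • b)) i j :=
        ((entryLinearMap ℝ ℝ i j).toContinuousLinearMap.integral_comp_comm
          (integrableOn_exp_smul_mul_mul_exp_smul ha hb C)).symm
    _ = _ := by simp_rw [a, b, smul_smul, mul_one_div]

/-- If `A` is stable (all eigenvalues have strictly negative real part), `C` is symmetric and
the symmetric matrix `X` solves `(AX + XAᵀ)/2 = −C`, then
`X = ∫₀^∞ e^{(t/2)A} C e^{(t/2)Aᵀ} dt` (entrywise). -/
theorem stmt6 {m : ℕ} (A C X : Matrix (Fin m) (Fin m) ℝ)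
    (hstable : ∀ μ ∈ spectrum ℂ (A.map (Complex.ofReal)), μ.re < 0)
    (hC : C.IsSymm) (hX : X.IsSymm)
    (hlyap : ((1:ℝ)/2) • (A * X + X * Aᵀ) = -C) :
    ∀ i j, X i j = ∫ t in Set.Ioi (0:ℝ),
      (NormedSpace.exp ((t/2) • A) * C * NormedSpace.exp ((t/2) • Aᵀ)) i j :=
  stmt6_general A C X hstable hlyap
end

section
/- Let Γ and Λ be m×m diagonal matrices with positive diagonal entries and Δ² a symmetric m×m matrix such that I − β²ΓΔ²Λ has all eigenvalues with positive real part. Then ∫₀^∞ exp(−(t/2)(I − β²ΓΔ²Λ)) Γ Λ^{-1} exp(−(t/2)(I − β²ΛΔ²Γ)) dt = Γ (I − β²Δ²ΛΓ)^{-1} Λ^{-1}. -/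
/-!
Write `Γ = DE` and `Λ = D⁻¹E` with `D = (ΓΛ⁻¹)^{1/2}` and `E = (ΓΛ)^{1/2}` positive diagonal, and
put `S = I − β²EΔ²E`, a symmetric matrix. Then `I − β²ΓΔ²Λ = DSD⁻¹`, `I − β²ΛΔ²Γ = D⁻¹SD`,
`I − β²Δ²ΛΓ = E⁻¹SE` and `ΓΛ⁻¹ = D²`, so the integrand collapses to `D e^{−tS} D`. Being similar to
the stable matrix `I − β²ΓΔ²Λ`, the symmetric `S` is positive definite; diagonalising it by an
orthogonal matrix gives `∫₀^∞ e^{−tS} dt = S⁻¹`, and `D S⁻¹ D = Γ (E⁻¹SE)⁻¹ Λ⁻¹`.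
-/

open Matrix MeasureTheory

theorem exists_mul_eq_and_inv_mul_eq {a b : ℝ} (ha : 0 < a) (hb : 0 < b) :
    ∃ d e : ℝ, d ≠ 0 ∧ e ≠ 0 ∧ a = d * e ∧ b = d⁻¹ * e := by
  refine ⟨√a / √b, √a * √b, by positivity, by positivity, ?_, ?_⟩
  · field_simp
    rw [Real.sq_sqrt ha.le]
  · field_simp
    rw [Real.sq_sqrt hb.le]

namespace Matrix

variable {n : Type*} [Fintype n] [DecidableEq n]

theorem inv_conj {R : Type*} [CommRing R] {P Q : Matrix n n R} (hPQ : P * Q = 1)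
    (A : Matrix n n R) : (P * A * Q)⁻¹ = P * A⁻¹ * Q := by
  rw [mul_inv_rev, mul_inv_rev, inv_eq_left_inv hPQ, inv_eq_right_inv hPQ, Matrix.mul_assoc]

theorem one_sub_smul_conj {R : Type*} [CommRing R] {P Q : Matrix n n R} (hPQ : P * Q = 1)
    (A : Matrix n n R) (c : R) : 1 - c • (P * A * Q) = P * (1 - c • A) * Q := by
  rw [Matrix.mul_sub, Matrix.sub_mul, Matrix.mul_one, hPQ, mul_smul_comm, smul_mul_assoc]

theorem inv_diagonal_of_ne_zero {K : Type*} [Field K] {d : n → K} (hd : ∀ k, d k ≠ 0) :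
    (diagonal d)⁻¹ = diagonal d⁻¹ :=
  inv_eq_left_inv <| by
    rw [diagonal_mul_diagonal, ← diagonal_one]
    exact congrArg diagonal (funext fun k => inv_mul_cancel₀ (hd k))

theorem mul_diagonal_mul_apply {l m R : Type*} [Fintype m] [CommSemiring R] (A : Matrix l n R)
    (g : n → R) (B : Matrix n m R) (i : l) (j : m) :
    (A * diagonal g * B) i j = ∑ k, A i k * g k * B k j := by
  rw [Matrix.mul_apply]
  simp only [mul_diagonal]

theorem integral_mul_diagonal_mul_apply {l m α : Type*} [Fintype m] [MeasurableSpace α]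
    {μ : Measure α} (A : Matrix l n ℝ) (B : Matrix n m ℝ) {f : n → α → ℝ}
    (hf : ∀ k, Integrable (f k) μ) (i : l) (j : m) :
    ∫ x, (A * diagonal (fun k => f k x) * B) i j ∂μ
      = (A * diagonal (fun k => ∫ x, f k x ∂μ) * B) i j := by
  simp only [mul_diagonal_mul_apply]
  rw [integral_finsetSum _ fun k _ => ((hf k).const_mul _).mul_const _]
  simp only [integral_mul_const, integral_const_mul]

theorem map_mem_spectrum_map {K L : Type*} [Field K] [CommRing L] [Nontrivial L] (f : K →+* L)
    {A : Matrix n n K} {x : K} (hx : x ∈ spectrum K A) : f x ∈ spectrum L (A.map f) := by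
  rw [mem_spectrum_iff_isRoot_charpoly] at hx
  exact mem_spectrum_of_isRoot_charpoly (by rw [charpoly_map]; exact hx.map)

namespace IsHermitian

variable {S : Matrix n n ℝ} (hS : S.IsHermitian)
include hS

theorem isUnit_eigenvectorUnitary : IsUnit (hS.eigenvectorUnitary : Matrix n n ℝ) :=
  (isUnit_iff_isUnit_det _).2 (UnitaryGroup.det_isUnit _)

theorem eq_eigenvectorUnitary_mul_diagonal_mul_inv :
    S = (hS.eigenvectorUnitary : Matrix n n ℝ) * diagonal hS.eigenvalues *
      (hS.eigenvectorUnitary : Matrix n n ℝ)⁻¹ := by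
  rw [inv_eq_left_inv (UnitaryGroup.star_mul_self _)]
  conv_lhs => rw [hS.spectral_theorem]
  simp

theorem posDef_of_re_pos_spectrum_conj {P : Matrix n n ℝ} (hP : IsUnit P)
    (h : ∀ μ ∈ spectrum ℂ ((P * S * P⁻¹).map Complex.ofReal), 0 < μ.re) : S.PosDef := by
  refine hS.posDef_iff_eigenvalues_pos.2 fun k => ?_
  have hk : hS.eigenvalues k ∈ spectrum ℝ (P * S * P⁻¹) := by
    rw [← hP.unit_spec, ← coe_units_inv, spectrum.units_conjugate]
    exact hS.eigenvalues_mem_spectrum_real k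
  simpa using h _ (map_mem_spectrum_map Complex.ofRealHom hk)

end IsHermitian

theorem IsSymm.isHermitian_one_sub_smul_diagonal_mul_mul_diagonal {A : Matrix n n ℝ}
    (hA : A.IsSymm) (e : n → ℝ) (c : ℝ) :
    (1 - c • (diagonal e * A * diagonal e)).IsHermitian := by
  refine isHermitian_iff_isSymm.2 (isSymm_one.sub (IsSymm.smul ?_ c))
  rw [IsSymm, transpose_mul, transpose_mul, diagonal_transpose, hA.eq, Matrix.mul_assoc]

theorem PosDef.integral_mul_exp_neg_smul_mul_apply {S : Matrix n n ℝ} (hS : S.PosDef)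
    {l m : Type*} [Fintype m] (P : Matrix l n ℝ) (Q : Matrix n m ℝ) (i : l) (j : m) :
    ∫ t in Set.Ioi (0 : ℝ), (P * NormedSpace.exp ((-t) • S) * Q) i j = (P * S⁻¹ * Q) i j := by
  set U : Matrix n n ℝ := (hS.isHermitian.eigenvectorUnitary : Matrix n n ℝ)
  set w := hS.isHermitian.eigenvalues
  have hU : IsUnit U := hS.isHermitian.isUnit_eigenvectorUnitary
  have hSU : S = U * diagonal w * U⁻¹ := hS.isHermitian.eq_eigenvectorUnitary_mul_diagonal_mul_inv
  have hexp : ∀ t : ℝ, NormedSpace.exp ((-t) • S)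
      = U * diagonal (fun k => Real.exp (-w k * t)) * U⁻¹ := fun t => by
    rw [hSU, ← smul_mul_assoc, ← mul_smul_comm, ← diagonal_smul, exp_conj _ _ hU, exp_diagonal]
    congr
    ext k
    simp [Real.exp_eq_exp_ℝ, mul_comm]
  have hinv : S⁻¹ = U * diagonal (fun k => ∫ t in Set.Ioi (0 : ℝ), Real.exp (-w k * t)) * U⁻¹ := by
    rw [hSU, inv_conj (mul_nonsing_inv _ ((isUnit_iff_isUnit_det U).1 hU)),
      inv_diagonal_of_ne_zero fun k => (hS.eigenvalues_pos k).ne']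
    congr
    ext k
    rw [integral_exp_mul_Ioi (neg_lt_zero.2 (hS.eigenvalues_pos k))]
    simp
  have hassoc : ∀ X : Matrix n n ℝ, P * (U * X * U⁻¹) * Q = P * U * X * (U⁻¹ * Q) := fun X => by
    simp only [Matrix.mul_assoc]
  simp only [hexp, hinv, hassoc]
  exact integral_mul_diagonal_mul_apply _ _
    (fun k => exp_neg_integrableOn_Ioi 0 (hS.eigenvalues_pos k)) i j

theorem exp_conj_mul_mul_exp_inv_conj {P S : Matrix n n ℝ} (hP : IsUnit P) (t : ℝ) :
    NormedSpace.exp ((-(t / 2)) • (P * S * P⁻¹)) * (P * P) *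
        NormedSpace.exp ((-(t / 2)) • (P⁻¹ * S * P))
      = P * NormedSpace.exp ((-t) • S) * P := by
  have hP' := (isUnit_iff_isUnit_det P).1 hP
  have hhalf : NormedSpace.exp ((-(t / 2)) • S) * NormedSpace.exp ((-(t / 2)) • S)
      = NormedSpace.exp ((-t) • S) := by
    rw [← exp_add_of_commute _ _ (Commute.refl _), ← add_smul, ← neg_add, add_halves]
  have hsmul : ∀ X Y : Matrix n n ℝ, (-(t / 2)) • (X * S * Y) = X * ((-(t / 2)) • S) * Y :=
    fun X Y => by rw [Matrix.mul_smul, Matrix.smul_mul]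
  rw [hsmul, hsmul, exp_conj _ _ hP, exp_conj' _ _ hP]
  simp only [Matrix.mul_assoc, nonsing_inv_mul_cancel_left _ _ hP',
    mul_nonsing_inv_cancel_left _ _ hP']
  rw [← Matrix.mul_assoc _ _ P, hhalf]

section DiagonalFactorization

variable {d e : n → ℝ} (hd : ∀ k, d k ≠ 0) (he : ∀ k, e k ≠ 0)
include hd

theorem diagonal_mul_mul_inv_mul_diagonal (A : Matrix n n ℝ) :
    diagonal (d * e) * A * diagonal (d⁻¹ * e)
      = diagonal d * (diagonal e * A * diagonal e) * (diagonal d)⁻¹ := by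
  ext i j
  simp only [inv_diagonal_of_ne_zero hd, mul_diagonal, diagonal_mul, Pi.mul_apply, Pi.inv_apply]
  ring

theorem diagonal_inv_mul_mul_mul_diagonal (A : Matrix n n ℝ) :
    diagonal (d⁻¹ * e) * A * diagonal (d * e)
      = (diagonal d)⁻¹ * (diagonal e * A * diagonal e) * diagonal d := by
  ext i j
  simp only [inv_diagonal_of_ne_zero hd, mul_diagonal, diagonal_mul, Pi.mul_apply, Pi.inv_apply]
  ring

include he

theorem mul_diagonal_inv_mul_mul_diagonal (A : Matrix n n ℝ) :
    A * diagonal (d⁻¹ * e) * diagonal (d * e)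
      = (diagonal e)⁻¹ * (diagonal e * A * diagonal e) * diagonal e := by
  ext i j
  simp only [inv_diagonal_of_ne_zero he, mul_diagonal, diagonal_mul, Pi.mul_apply, Pi.inv_apply]
  field_simp [hd j, he i]

theorem diagonal_mul_inv_diagonal_inv_mul :
    diagonal (d * e) * (diagonal (d⁻¹ * e))⁻¹ = diagonal d * diagonal d := by
  rw [inv_diagonal_of_ne_zero (d := d⁻¹ * e) fun k => mul_ne_zero (inv_ne_zero (hd k)) (he k),
    diagonal_mul_diagonal, diagonal_mul_diagonal]
  congr 1
  ext k
  simp only [Pi.mul_apply, Pi.inv_apply]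
  field_simp [he k]

theorem diagonal_mul_conj_mul_inv_diagonal_inv_mul (X : Matrix n n ℝ) :
    diagonal (d * e) * ((diagonal e)⁻¹ * X * diagonal e) * (diagonal (d⁻¹ * e))⁻¹
      = diagonal d * X * diagonal d := by
  rw [inv_diagonal_of_ne_zero he,
    inv_diagonal_of_ne_zero (d := d⁻¹ * e) fun k => mul_ne_zero (inv_ne_zero (hd k)) (he k)]
  ext i j
  simp only [_root_.mul_inv_rev, inv_inv, mul_diagonal, diagonal_mul, Pi.mul_apply, Pi.inv_apply]
  field_simp [he i, he j]

end DiagonalFactorization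

end Matrix

/-- For `Γ, Λ` diagonal positive and `Δ²` symmetric with `I − β²ΓΔ²Λ` having all eigenvalues
of positive real part,
`∫₀^∞ e^{−(t/2)(I−β²ΓΔ²Λ)} ΓΛ⁻¹ e^{−(t/2)(I−β²ΛΔ²Γ)} dt = Γ(I−β²Δ²ΛΓ)⁻¹Λ⁻¹`. -/
theorem stmt9 {m : ℕ} (γ lam : Fin m → ℝ) (hγ : ∀ s, 0 < γ s) (hlam : ∀ s, 0 < lam s)
    (Δ2 : Matrix (Fin m) (Fin m) ℝ) (hsymm : Δ2.IsSymm) (β : ℝ)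
    (Γ : Matrix (Fin m) (Fin m) ℝ) (hΓ : Γ = Matrix.diagonal γ)
    (Λ : Matrix (Fin m) (Fin m) ℝ) (hΛ : Λ = Matrix.diagonal lam)
    (hstable : ∀ μ ∈ spectrum ℂ
      (((1 : Matrix (Fin m) (Fin m) ℝ) - β^2 • (Γ * Δ2 * Λ)).map (Complex.ofReal)),
      0 < μ.re) :
    ∀ i j,
      (∫ t in Set.Ioi (0:ℝ),
        (NormedSpace.exp ((-(t/2)) • ((1 : Matrix (Fin m) (Fin m) ℝ) - β^2 • (Γ * Δ2 * Λ)))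
          * (Γ * Λ⁻¹) *
         NormedSpace.exp ((-(t/2)) • ((1 : Matrix (Fin m) (Fin m) ℝ) - β^2 • (Λ * Δ2 * Γ))))
        i j)
      = (Γ * ((1 : Matrix (Fin m) (Fin m) ℝ) - β^2 • (Δ2 * Λ * Γ))⁻¹ * Λ⁻¹) i j := by
  subst hΓ hΛ
  choose d e hd he hγde hlamde using fun s => exists_mul_eq_and_inv_mul_eq (hγ s) (hlam s)
  obtain rfl : γ = d * e := funext hγde
  obtain rfl : lam = d⁻¹ * e := funext hlamde
  have hD : IsUnit (diagonal d).det := by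
    simpa [det_diagonal] using Finset.prod_ne_zero_iff.2 fun k _ => hd k
  have hE : IsUnit (diagonal e).det := by
    simpa [det_diagonal] using Finset.prod_ne_zero_iff.2 fun k _ => he k
  set S := 1 - β ^ 2 • (diagonal e * Δ2 * diagonal e) with hS_def
  have hM : 1 - β ^ 2 • (diagonal (d * e) * Δ2 * diagonal (d⁻¹ * e))
      = diagonal d * S * (diagonal d)⁻¹ := by
    rw [diagonal_mul_mul_inv_mul_diagonal hd, one_sub_smul_conj (mul_nonsing_inv _ hD)]
  have hS : S.PosDef :=
    (hsymm.isHermitian_one_sub_smul_diagonal_mul_mul_diagonal e _).posDef_of_re_pos_spectrum_conj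
      ((isUnit_iff_isUnit_det _).2 hD) (hM ▸ hstable)
  intro i j
  rw [hM, diagonal_inv_mul_mul_mul_diagonal hd, one_sub_smul_conj (nonsing_inv_mul _ hD),
    diagonal_mul_inv_diagonal_inv_mul hd he, ← hS_def]
  simp_rw [exp_conj_mul_mul_exp_inv_conj ((isUnit_iff_isUnit_det _).2 hD)]
  rw [hS.integral_mul_exp_neg_smul_mul_apply, mul_diagonal_inv_mul_mul_diagonal hd he,
    one_sub_smul_conj (nonsing_inv_mul _ hE), inv_conj (nonsing_inv_mul _ hE),
    diagonal_mul_conj_mul_inv_diagonal_inv_mul hd he]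
end

section
/- Let m = 2, Δ² a 2×2 matrix with positive entries such that Δ²Λ is invertible with det(Δ²Λ) < 0 (indefinite case), so that (Δ²Λ)^{-1} = [[−a, b],[c, −d]] with a,b,c,d > 0. Fix β > 0, h > 0, and let g(x) = E tanh²(βη√x + h)/x for x > 0 where η ~ N(0,1). Then g is strictly decreasing on (0,∞); moreover, the function x ↦ x · E tanh²(βη√x + h) + a x² is strictly increasing on (0,∞), and x ↦ E tanh²(βη√x+h)/x + a is strictly decreasing on (0,∞) for any a > 0. -/
open MeasureTheory ProbabilityTheory
open scoped ENNReal NNReal Real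

section Aux

lemma tanh_eq_fun : Real.tanh = fun x => Real.sinh x / Real.cosh x :=
  funext fun x => Real.tanh_eq_sinh_div_cosh x

lemma tanh_hasDerivAt (x : ℝ) : HasDerivAt Real.tanh (1 - Real.tanh x ^ 2) x := by
  have h : HasDerivAt (fun y => Real.sinh y / Real.cosh y)
      ((Real.cosh x * Real.cosh x - Real.sinh x * Real.sinh x) / Real.cosh x ^ 2) x :=
    (Real.hasDerivAt_sinh x).div (Real.hasDerivAt_cosh x) (Real.cosh_pos x).ne'
  rw [tanh_eq_fun]
  convert h using 1
  have hc := (Real.cosh_pos x).ne'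
  have h2 := Real.cosh_sq x
  simp only [Real.tanh_eq_sinh_div_cosh, div_pow]
  field_simp

lemma continuous_tanh' : Continuous Real.tanh := by
  rw [tanh_eq_fun]
  exact Real.continuous_sinh.div Real.continuous_cosh fun x => (Real.cosh_pos x).ne'

lemma tanh_sq_lt_one (x : ℝ) : Real.tanh x ^ 2 < 1 := by
  rw [Real.tanh_eq_sinh_div_cosh, div_pow, div_lt_one (by positivity)]
  nlinarith [Real.cosh_sq x]

lemma abs_tanh_le_one (x : ℝ) : |Real.tanh x| ≤ 1 := by
  nlinarith [tanh_sq_lt_one x, sq_abs (Real.tanh x), abs_nonneg (Real.tanh x)]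

lemma tanh_pos_of_pos {x : ℝ} (hx : 0 < x) : 0 < Real.tanh x := by
  rw [Real.tanh_eq_sinh_div_cosh]
  exact div_pos (Real.sinh_pos_iff.2 hx) (Real.cosh_pos x)

/-- key pointwise inequality  `t·tanh t·sech²t ≤ tanh²t` -/
lemma key_ineq (t : ℝ) : t * (Real.tanh t * (1 - Real.tanh t ^ 2)) ≤ Real.tanh t ^ 2 := by
  have hc := Real.cosh_pos t
  have key : t * Real.sinh t ≤ Real.sinh t ^ 2 * Real.cosh t := by
    have main : ∀ s : ℝ, 0 ≤ s → s * Real.sinh s ≤ Real.sinh s ^ 2 * Real.cosh s := by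
      intro s hs
      have h1 : s ≤ Real.sinh s := Real.self_le_sinh_iff.2 hs
      have h2 : 0 ≤ Real.sinh s := Real.sinh_nonneg_iff.2 hs
      have h3 : 1 ≤ Real.cosh s := Real.one_le_cosh s
      nlinarith
    rcases le_total 0 t with ht | ht
    · exact main t ht
    · have := main (-t) (by linarith)
      simpa [Real.sinh_neg, Real.cosh_neg] using this
  have h1 : 1 - Real.tanh t ^ 2 = (Real.cosh t ^ 2)⁻¹ := by
    have h2 := Real.cosh_sq t
    rw [Real.tanh_eq_sinh_div_cosh, div_pow]
    field_simp
    linarith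
  rw [h1, Real.tanh_eq_sinh_div_cosh, div_pow]
  have h3 : t * (Real.sinh t / Real.cosh t * (Real.cosh t ^ 2)⁻¹)
      = t * Real.sinh t / Real.cosh t ^ 3 := by
    ring
  rw [h3, div_le_div_iff₀ (by positivity) (by positivity)]
  nlinarith [key, hc, sq_nonneg (Real.cosh t)]

noncomputable def u0 : ℝ → ℝ := fun t => Real.tanh t * (1 - Real.tanh t ^ 2)

lemma continuous_u0 : Continuous u0 :=
  continuous_tanh'.mul (continuous_const.sub (continuous_tanh'.pow 2))

lemma u0_pos {t : ℝ} (ht : 0 < t) : 0 < u0 t :=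
  mul_pos (tanh_pos_of_pos ht) (by nlinarith [tanh_sq_lt_one t])

lemma u0_neg_eq (t : ℝ) : u0 (-t) = - u0 t := by
  simp only [u0, Real.tanh_neg]
  ring

lemma u0_abs_le_one (t : ℝ) : |Real.tanh t * (1 - Real.tanh t ^ 2)| ≤ 1 := by
  rw [abs_mul]
  have h1 := abs_tanh_le_one t
  have h2 : |1 - Real.tanh t ^ 2| ≤ 1 := by
    rw [abs_of_nonneg (by nlinarith [tanh_sq_lt_one t])]
    nlinarith [sq_nonneg (Real.tanh t)]
  nlinarith [abs_nonneg (Real.tanh t), abs_nonneg (1 - Real.tanh t ^ 2)]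

lemma u0_bdd (t : ℝ) : ‖u0 t‖ ≤ 1 := by
  rw [Real.norm_eq_abs]; exact u0_abs_le_one t

lemma tanh_sq_bound (t : ℝ) : ‖Real.tanh t ^ 2‖ ≤ 1 := by
  rw [Real.norm_eq_abs, abs_of_nonneg (sq_nonneg _)]
  exact (tanh_sq_lt_one t).le

/-- change of variables for the Gaussian integral -/
lemma gaussian_cv (σ m : ℝ) (hσ : 0 < σ) (F : ℝ → ℝ) (hF : Measurable F) :
    ∫ z, F (σ * z + m) ∂(gaussianReal 0 1)
      = ∫ t, F t * gaussianPDFReal m ⟨σ^2, sq_nonneg σ⟩ t := by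
  set v : NNReal := ⟨σ^2, sq_nonneg σ⟩ with hv_def
  have hv : v ≠ 0 := by
    intro hcon
    have : σ^2 = 0 := congrArg NNReal.toReal hcon
    nlinarith
  have hmap : Measure.map (fun z => σ * z + m) (gaussianReal 0 1) = gaussianReal m v := by
    have h1 : (gaussianReal (0:ℝ) 1).map (σ * ·) = gaussianReal (σ * 0) (⟨σ^2, sq_nonneg σ⟩ * 1) :=
      gaussianReal_map_const_mul σ
    have h2 : (gaussianReal (σ * 0) (⟨σ^2, sq_nonneg σ⟩ * 1)).map (· + m)
        = gaussianReal (σ * 0 + m) (⟨σ^2, sq_nonneg σ⟩ * 1) := gaussianReal_map_add_const m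
    have h3 : Measure.map (fun z => σ * z + m) (gaussianReal 0 1)
        = ((gaussianReal (0:ℝ) 1).map (σ * ·)).map (· + m) := by
      rw [Measure.map_map (measurable_add_const m) (measurable_const_mul σ)]
      rfl
    rw [h3, h1, h2]
    simp [hv_def]
    exact congrArg _ (mul_one _)
  have step1 : ∫ z, F (σ * z + m) ∂(gaussianReal 0 1) = ∫ t, F t ∂(gaussianReal m v) := by
    rw [← hmap, integral_map ((measurable_const_mul σ).add_const m).aemeasurable
      hF.aestronglyMeasurable]
  rw [step1, gaussianReal_of_var_ne_zero m hv]
  have hpdf : (gaussianPDF m v)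
      = fun t => ((Real.toNNReal (gaussianPDFReal m v t) : ℝ≥0) : ℝ≥0∞) := rfl
  rw [hpdf, integral_withDensity_eq_integral_smul (measurable_gaussianPDFReal m v).real_toNNReal F]
  congr 1
  ext t
  rw [NNReal.smul_def, Real.coe_toNNReal _ (gaussianPDFReal_nonneg m v t), smul_eq_mul, mul_comm]

lemma integrable_abs_gaussian : Integrable (fun z => |z|) (gaussianReal 0 1) := by
  rw [gaussianReal_of_var_ne_zero 0 one_ne_zero]
  have hpdf : gaussianPDF 0 1
      = fun t => ((Real.toNNReal (gaussianPDFReal 0 1 t) : ℝ≥0) : ℝ≥0∞) := rfl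
  rw [hpdf, integrable_withDensity_iff_integrable_smul
    (measurable_gaussianPDFReal 0 1).real_toNNReal]
  have h1 : (fun z => (Real.toNNReal (gaussianPDFReal 0 1 z)) • |z|)
      = fun z => |z * gaussianPDFReal 0 1 z| := by
    funext z
    rw [NNReal.smul_def, Real.coe_toNNReal _ (gaussianPDFReal_nonneg 0 1 z), smul_eq_mul,
      abs_mul, abs_of_nonneg (gaussianPDFReal_nonneg 0 1 z)]
    ring
  rw [h1]
  apply Integrable.abs
  have key : Integrable (fun z : ℝ => z * Real.exp (-(1/2) * z^2)) :=
    integrable_mul_exp_neg_mul_sq (by norm_num)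
  have heq : (fun z => z * gaussianPDFReal 0 1 z)
      = fun z => (Real.sqrt (2*Real.pi))⁻¹ * (z * Real.exp (-(1/2)*z^2)) := by
    funext z
    rw [gaussianPDFReal]
    push_cast
    rw [show -(z-0)^2/(2*(1:ℝ)) = -(1/2)*z^2 by ring]
    ring_nf
  rw [heq]
  exact key.const_mul _

/-- pointwise monotonicity of `x * pdf` -/
lemma xpdf_mono {β m : ℝ} (hβ : 0 < β) {x y t : ℝ} (hx : 0 < x) (hxy : x ≤ y) :
    x * gaussianPDFReal m ⟨(β*Real.sqrt x)^2, sq_nonneg _⟩ t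
      ≤ y * gaussianPDFReal m ⟨(β*Real.sqrt y)^2, sq_nonneg _⟩ t := by
  have hy : 0 < y := lt_of_lt_of_le hx hxy
  have repr : ∀ u : ℝ, 0 < u → u * gaussianPDFReal m ⟨(β*Real.sqrt u)^2, sq_nonneg _⟩ t
      = Real.sqrt u * (Real.sqrt (2*Real.pi*β^2))⁻¹
        * Real.exp (-((t-m)^2/(2*β^2))/u) := by
    intro u hu
    have hsq : (β*Real.sqrt u)^2 = β^2 * u := by
      rw [mul_pow, Real.sq_sqrt hu.le]
    unfold gaussianPDFReal
    push_cast [hsq]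
    change u * ((Real.sqrt (2 * Real.pi * (β^2*u)))⁻¹ * Real.exp (-(t - m) ^ 2 / (2 * (β^2*u)))) = _
    have h1 : 2*Real.pi*(β^2*u) = (2*Real.pi*β^2)*u := by ring
    rw [h1, Real.sqrt_mul (by positivity) u]
    have h2 : -(t-m)^2/(2*(β^2*u)) = -((t-m)^2/(2*β^2))/u := by
      field_simp
    rw [h2]
    rw [mul_inv]
    have h3 : u * ((Real.sqrt (2*Real.pi*β^2))⁻¹ * (Real.sqrt u)⁻¹)
        = (u / Real.sqrt u) * (Real.sqrt (2*Real.pi*β^2))⁻¹ := by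
      ring
    rw [← mul_assoc, h3, Real.div_sqrt]
  rw [repr x hx, repr y hy]
  have hd : 0 ≤ (t-m)^2/(2*β^2) := by positivity
  have h4 : (t-m)^2/(2*β^2)/y ≤ (t-m)^2/(2*β^2)/x := by
    apply div_le_div_of_nonneg_left hd hx hxy
  have h5 : Real.exp (-((t-m)^2/(2*β^2))/x) ≤ Real.exp (-((t-m)^2/(2*β^2))/y) := by
    apply Real.exp_le_exp.2
    rw [neg_div, neg_div]
    exact neg_le_neg h4
  apply mul_le_mul _ h5 (Real.exp_pos _).le (by positivity)
  exact mul_le_mul_of_nonneg_right (Real.sqrt_le_sqrt hxy) (by positivity)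

lemma xfx_repr (β h : ℝ) (hβ : 0 < β) {u : ℝ} (hu : 0 < u) :
    u * (∫ z, Real.tanh (β * z * Real.sqrt u + h) ^ 2 ∂(gaussianReal 0 1))
      = ∫ t, Real.tanh t ^ 2 * (u * gaussianPDFReal h ⟨(β*Real.sqrt u)^2, sq_nonneg _⟩ t) := by
  have h1 : (fun z => Real.tanh (β * z * Real.sqrt u + h) ^ 2)
      = fun z => (fun t => Real.tanh t ^ 2) ((β * Real.sqrt u) * z + h) := by
    funext z
    have : β * z * Real.sqrt u + h = (β * Real.sqrt u) * z + h := by ring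
    rw [this]
  rw [h1, gaussian_cv (β * Real.sqrt u) h (by positivity) (fun t => Real.tanh t ^ 2) (continuous_tanh'.pow 2).measurable,
    ← integral_const_mul]
  congr 1
  funext t
  ring

lemma integrable_tanhsq_xpdf (h u : ℝ) (v : ℝ≥0) :
    Integrable (fun t => Real.tanh t ^ 2 * (u * gaussianPDFReal h v t)) := by
  refine Integrable.bdd_mul ((integrable_gaussianPDFReal h v).const_mul u)
    ((continuous_tanh'.pow 2).aestronglyMeasurable) (Filter.Eventually.of_forall tanh_sq_bound)

lemma xfx_le (β h : ℝ) (hβ : 0 < β) {x y : ℝ} (hx : 0 < x) (hxy : x ≤ y) :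
    x * (∫ z, Real.tanh (β * z * Real.sqrt x + h) ^ 2 ∂(gaussianReal 0 1))
      ≤ y * (∫ z, Real.tanh (β * z * Real.sqrt y + h) ^ 2 ∂(gaussianReal 0 1)) := by
  have hy : 0 < y := lt_of_lt_of_le hx hxy
  rw [xfx_repr β h hβ hx, xfx_repr β h hβ hy]
  refine integral_mono (integrable_tanhsq_xpdf h x _) (integrable_tanhsq_xpdf h y _) ?_
  intro t
  exact mul_le_mul_of_nonneg_left (xpdf_mono hβ hx hxy) (sq_nonneg _)

/-- derivative of `f` under the integral sign -/
lemma f_hasDerivAt (β h : ℝ) (hβ : 0 < β) {x₀ : ℝ} (hx : 0 < x₀) :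
    HasDerivAt (fun x => ∫ z, Real.tanh (β * z * Real.sqrt x + h) ^ 2 ∂(gaussianReal 0 1))
      (∫ z, β * z / Real.sqrt x₀ *
        (Real.tanh (β * z * Real.sqrt x₀ + h) * (1 - Real.tanh (β * z * Real.sqrt x₀ + h) ^ 2))
        ∂(gaussianReal 0 1)) x₀ := by
  set γ := gaussianReal (0:ℝ) 1
  have hmain := hasDerivAt_integral_of_dominated_loc_of_deriv_le
    (F := fun x z => Real.tanh (β * z * Real.sqrt x + h) ^ 2)
    (F' := fun x z => β * z / Real.sqrt x *
      (Real.tanh (β * z * Real.sqrt x + h) * (1 - Real.tanh (β * z * Real.sqrt x + h) ^ 2)))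
    (μ := γ) (x₀ := x₀) (bound := fun z => β * |z| / Real.sqrt (x₀/2))
    (Metric.ball_mem_nhds x₀ (half_pos hx))
    (Filter.Eventually.of_forall fun x => (Continuous.aestronglyMeasurable (by
      exact (continuous_tanh'.comp (((continuous_const.mul continuous_id).mul
        continuous_const).add continuous_const)).pow 2)))
    (by
      refine Integrable.mono' (integrable_const (1:ℝ)) (Continuous.aestronglyMeasurable (by
        exact (continuous_tanh'.comp (((continuous_const.mul continuous_id).mul
          continuous_const).add continuous_const)).pow 2)) ?_
      exact Filter.Eventually.of_forall fun z => by
        rw [Real.norm_eq_abs, abs_of_nonneg (sq_nonneg _)]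
        exact (tanh_sq_lt_one _).le)
    (Continuous.aestronglyMeasurable (by
      exact ((continuous_const.mul continuous_id).div_const _).mul
        ((continuous_tanh'.comp (((continuous_const.mul continuous_id).mul
          continuous_const).add continuous_const)).mul
          (continuous_const.sub ((continuous_tanh'.comp (((continuous_const.mul
            continuous_id).mul continuous_const).add continuous_const)).pow 2)))))
    (Filter.Eventually.of_forall fun z => by
      intro x hxball
      have hx2 : x₀/2 < x := by
        have := abs_lt.1 (mem_ball_iff_norm.1 hxball)
        linarith [this.1]
      have hxpos : 0 < x := lt_trans (half_pos hx) hx2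
      have hs : Real.sqrt (x₀/2) ≤ Real.sqrt x := Real.sqrt_le_sqrt hx2.le
      have hs0 : 0 < Real.sqrt (x₀/2) := Real.sqrt_pos.2 (half_pos hx)
      rw [Real.norm_eq_abs, abs_mul]
      have h1 : |β * z / Real.sqrt x| ≤ β * |z| / Real.sqrt (x₀/2) := by
        rw [abs_div, abs_mul, abs_of_nonneg hβ.le, abs_of_nonneg (Real.sqrt_nonneg x)]
        exact div_le_div_of_nonneg_left (by positivity) hs0 hs
      calc |β * z / Real.sqrt x| * |_| ≤ |β * z / Real.sqrt x| * 1 := by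
            exact mul_le_mul_of_nonneg_left (u0_abs_le_one _) (abs_nonneg _)
        _ = |β * z / Real.sqrt x| := mul_one _
        _ ≤ β * |z| / Real.sqrt (x₀/2) := h1)
    ((integrable_abs_gaussian.const_mul β).div_const _)
    (Filter.Eventually.of_forall fun z => by
      intro x hxball
      have hx2 : x₀/2 < x := by
        have := abs_lt.1 (mem_ball_iff_norm.1 hxball)
        linarith [this.1]
      have hxpos : 0 < x := lt_trans (half_pos hx) hx2
      have hsqrt : HasDerivAt (fun x : ℝ => β * z * Real.sqrt x + h)
          (β * z * (1 / (2 * Real.sqrt x))) x :=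
        ((Real.hasDerivAt_sqrt hxpos.ne').const_mul (β * z)).add_const h
      have htanh := (tanh_hasDerivAt (β * z * Real.sqrt x + h)).comp x hsqrt
      have hpow : HasDerivAt (fun y => Real.tanh (β * z * Real.sqrt y + h) ^ 2)
          (((2:ℕ):ℝ) * Real.tanh (β * z * Real.sqrt x + h) ^ (2 - 1) *
            ((1 - Real.tanh (β * z * Real.sqrt x + h) ^ 2) * (β * z * (1 / (2 * Real.sqrt x))))) x :=
        htanh.fun_pow 2
      refine hpow.congr_deriv ?_
      have hsx : Real.sqrt x ≠ 0 := (Real.sqrt_pos.2 hxpos).ne'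
      field_simp
      ring)
  exact hmain.2

lemma pdf_neg (m : ℝ) (v : ℝ≥0) (t : ℝ) :
    gaussianPDFReal m v (-t) = gaussianPDFReal (-m) v t := by
  unfold gaussianPDFReal
  congr 1
  rw [show -t - m = -(t + m) by ring, show t - -m = t + m by ring, neg_sq]

open Set in
lemma gauss_u0_pos (σ m : ℝ) (hσ : 0 < σ) (hm : 0 < m) :
    0 < ∫ z, u0 (σ * z + m) ∂(gaussianReal 0 1) := by
  rw [gaussian_cv σ m hσ u0 continuous_u0.measurable]
  set v : ℝ≥0 := ⟨σ^2, sq_nonneg σ⟩ with hv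
  set p : ℝ → ℝ := gaussianPDFReal m v with hp
  have hvpos : (0:ℝ) < (v : ℝ) := by
    show (0:ℝ) < σ^2
    positivity
  have hq_int : Integrable (fun t => u0 t * p t) :=
    Integrable.bdd_mul (integrable_gaussianPDFReal m v) continuous_u0.aestronglyMeasurable
      (Filter.Eventually.of_forall u0_bdd)
  have hq_int2 : Integrable (fun t => -(u0 t * p (-t))) := by
    have : Integrable (fun t => u0 t * gaussianPDFReal (-m) v t) :=
      Integrable.bdd_mul (integrable_gaussianPDFReal (-m) v) continuous_u0.aestronglyMeasurable
        (Filter.Eventually.of_forall u0_bdd)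
    refine (this.congr ?_).neg
    exact Filter.Eventually.of_forall fun t => by
      show u0 t * gaussianPDFReal (-m) v t = u0 t * gaussianPDFReal m v (-t)
      rw [pdf_neg]
  have hsplit : ∫ t, u0 t * p t = (∫ t in Ioi 0, u0 t * p t) + ∫ t in Iic 0, u0 t * p t := by
    rw [← integral_add_compl measurableSet_Ioi hq_int, compl_Ioi]
  have hneg : ∫ t in Iic 0, u0 t * p t = ∫ t in Ioi 0, -(u0 t * p (-t)) := by
    have h1 : ∫ t in Iic (0:ℝ), (fun s => u0 (-s) * p (-s)) (-t)
        = ∫ t in Ioi (-(0:ℝ)), u0 (-t) * p (-t) :=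
      integral_comp_neg_Iic 0 (fun s => u0 (-s) * p (-s))
    simp only [neg_neg, neg_zero] at h1
    rw [h1]
    congr 1
    funext t
    rw [u0_neg_eq]
    ring
  have hsum : (∫ t in Ioi 0, u0 t * p t) + (∫ t in Ioi 0, -(u0 t * p (-t)))
      = ∫ t in Ioi 0, u0 t * (p t - p (-t)) := by
    rw [← integral_add hq_int.restrict hq_int2.restrict]
    congr 1
    funext t
    ring
  rw [hsplit, hneg, hsum]
  have hnonneg : ∀ t ∈ Ioi (0:ℝ), 0 < u0 t * (p t - p (-t)) := by
    intro t ht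
    rw [mem_Ioi] at ht
    refine mul_pos (u0_pos ht) (sub_pos.2 ?_)
    rw [hp, pdf_neg]
    unfold gaussianPDFReal
    apply mul_lt_mul_of_pos_left _ (by positivity)
    apply Real.exp_lt_exp.2
    rw [div_lt_div_iff₀ (by positivity : (0:ℝ) < 2*(v:ℝ)) (by positivity : (0:ℝ) < 2*(v:ℝ))]
    nlinarith [mul_pos (mul_pos ht hm) hvpos]
  have h0le : 0 ≤ᵐ[volume.restrict (Ioi 0)] fun t => u0 t * (p t - p (-t)) := by
    filter_upwards [ae_restrict_mem measurableSet_Ioi] with t ht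
    exact (hnonneg t ht).le
  have hion : IntegrableOn (fun t => u0 t * (p t - p (-t))) (Ioi 0) := by
    refine ((hq_int.add hq_int2).congr ?_).restrict
    exact Filter.Eventually.of_forall fun t => by simp only [Pi.add_apply]; ring
  refine (setIntegral_pos_iff_support_of_nonneg_ae h0le hion).2 ?_
  have hsub : Ioi (0:ℝ) ⊆ Function.support fun t => u0 t * (p t - p (-t)) :=
    fun t ht => (hnonneg t ht).ne'
  rw [Set.inter_eq_self_of_subset_right hsub, Real.volume_Ioi]
  exact ENNReal.zero_lt_top

end Aux

/-- Latala–Guerra-type monotonicity: for `β, h, a > 0` and `η ~ N(0,1)`,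
`x ↦ x·E[tanh²(βη√x+h)] + a x²` is strictly increasing on `(0,∞)`, and
`x ↦ E[tanh²(βη√x+h)]/x + a` is strictly decreasing on `(0,∞)`. -/
theorem stmt17 (β h a : ℝ) (hβ : 0 < β) (hh : 0 < h) (ha : 0 < a) :
    StrictMonoOn
      (fun x : ℝ =>
        x * (∫ y, Real.tanh (β * y * Real.sqrt x + h) ^ 2 ∂(gaussianReal 0 1)) + a * x ^ 2)
      (Set.Ioi 0) ∧
    StrictAntiOn
      (fun x : ℝ =>
        (∫ y, Real.tanh (β * y * Real.sqrt x + h) ^ 2 ∂(gaussianReal 0 1)) / x + a)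
      (Set.Ioi 0) := by
  constructor
  · -- strictly increasing part
    intro x hx y hy hxy
    have hx' : 0 < x := hx
    have hy' : 0 < y := hy
    have h1 := xfx_le β h hβ hx' hxy.le
    have h2 : a * x^2 < a * y^2 := by
      apply mul_lt_mul_of_pos_left _ ha
      nlinarith
    simp only
    linarith
  · -- strictly decreasing part
    have key : ∀ x : ℝ, 0 < x →
        (∫ z, β * z / Real.sqrt x *
          (Real.tanh (β * z * Real.sqrt x + h) * (1 - Real.tanh (β * z * Real.sqrt x + h) ^ 2))
          ∂(gaussianReal 0 1)) * x
          < ∫ z, Real.tanh (β * z * Real.sqrt x + h) ^ 2 ∂(gaussianReal 0 1) := by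
      intro x hx
      have hsx : (0:ℝ) < Real.sqrt x := Real.sqrt_pos.2 hx
      have hD : (∫ z, β * z / Real.sqrt x *
          (Real.tanh (β * z * Real.sqrt x + h) * (1 - Real.tanh (β * z * Real.sqrt x + h) ^ 2))
          ∂(gaussianReal 0 1)) * x
          = ∫ z, (β * z * Real.sqrt x) * u0 (β * z * Real.sqrt x + h) ∂(gaussianReal 0 1) := by
        rw [mul_comm, ← integral_const_mul]
        congr 1
        funext z
        have step : x * (β * z / Real.sqrt x *
            (Real.tanh (β * z * Real.sqrt x + h) * (1 - Real.tanh (β * z * Real.sqrt x + h) ^ 2)))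
            = (x / Real.sqrt x) * (β * z * u0 (β * z * Real.sqrt x + h)) := by
          unfold u0
          ring
        rw [step, Real.div_sqrt]
        ring
      have int_u0 : Integrable (fun z => u0 (β * z * Real.sqrt x + h)) (gaussianReal 0 1) := by
        refine Integrable.mono' (integrable_const (1:ℝ)) (Continuous.aestronglyMeasurable ?_) ?_
        · exact continuous_u0.comp (((continuous_const.mul continuous_id).mul
            continuous_const).add continuous_const)
        · exact Filter.Eventually.of_forall fun z => u0_bdd _
      have int_tanhsq : Integrable (fun z => Real.tanh (β * z * Real.sqrt x + h) ^ 2)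
          (gaussianReal 0 1) := by
        refine Integrable.mono' (integrable_const (1:ℝ)) (Continuous.aestronglyMeasurable ?_) ?_
        · exact (continuous_tanh'.comp (((continuous_const.mul continuous_id).mul
            continuous_const).add continuous_const)).pow 2
        · exact Filter.Eventually.of_forall fun z => tanh_sq_bound _
      have int_lhs : Integrable (fun z => (β * z * Real.sqrt x) * u0 (β * z * Real.sqrt x + h))
          (gaussianReal 0 1) := by
        have hbd : Integrable (fun z => (β * Real.sqrt x) * |z|) (gaussianReal 0 1) :=
          integrable_abs_gaussian.const_mul _
        refine Integrable.mono' hbd (Continuous.aestronglyMeasurable ?_) ?_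
        · exact ((continuous_const.mul continuous_id).mul continuous_const).mul
            (continuous_u0.comp (((continuous_const.mul continuous_id).mul
              continuous_const).add continuous_const))
        · refine Filter.Eventually.of_forall fun z => ?_
          rw [Real.norm_eq_abs, abs_mul]
          calc |β * z * Real.sqrt x| * |u0 (β * z * Real.sqrt x + h)|
              ≤ |β * z * Real.sqrt x| * 1 :=
                mul_le_mul_of_nonneg_left (u0_abs_le_one _) (abs_nonneg _)
            _ = |β * z * Real.sqrt x| := mul_one _
            _ = β * Real.sqrt x * |z| := by
                rw [abs_mul, abs_mul, abs_of_nonneg hβ.le, abs_of_nonneg hsx.le]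
                ring
      have int_rhs : Integrable (fun z => Real.tanh (β * z * Real.sqrt x + h) ^ 2
          - h * u0 (β * z * Real.sqrt x + h)) (gaussianReal 0 1) :=
        int_tanhsq.sub (int_u0.const_mul h)
      have hmono : (∫ z, (β * z * Real.sqrt x) * u0 (β * z * Real.sqrt x + h) ∂(gaussianReal 0 1))
          ≤ ∫ z, Real.tanh (β * z * Real.sqrt x + h) ^ 2
            - h * u0 (β * z * Real.sqrt x + h) ∂(gaussianReal 0 1) := by
        refine integral_mono int_lhs int_rhs ?_
        intro z
        have h1 := key_ineq (β * z * Real.sqrt x + h)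
        have h2 : (β * z * Real.sqrt x) * u0 (β * z * Real.sqrt x + h)
            = (β * z * Real.sqrt x + h) *
                (Real.tanh (β * z * Real.sqrt x + h) *
                  (1 - Real.tanh (β * z * Real.sqrt x + h) ^ 2))
              - h * u0 (β * z * Real.sqrt x + h) := by
          unfold u0
          ring
        simp only
        rw [h2]
        linarith
      have hIpos : 0 < ∫ z, u0 (β * z * Real.sqrt x + h) ∂(gaussianReal 0 1) := by
        have heq : (fun z => u0 (β * z * Real.sqrt x + h))
            = fun z => u0 ((β * Real.sqrt x) * z + h) := by
          funext z
          rw [show β * z * Real.sqrt x = (β * Real.sqrt x) * z by ring]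
        rw [heq]
        exact gauss_u0_pos (β * Real.sqrt x) h (by positivity) hh
      have hsub : ∫ z, Real.tanh (β * z * Real.sqrt x + h) ^ 2
            - h * u0 (β * z * Real.sqrt x + h) ∂(gaussianReal 0 1)
          = (∫ z, Real.tanh (β * z * Real.sqrt x + h) ^ 2 ∂(gaussianReal 0 1))
            - h * ∫ z, u0 (β * z * Real.sqrt x + h) ∂(gaussianReal 0 1) := by
        rw [integral_sub int_tanhsq (int_u0.const_mul h), integral_const_mul]
      rw [hD]
      calc (∫ z, (β * z * Real.sqrt x) * u0 (β * z * Real.sqrt x + h) ∂(gaussianReal 0 1))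
          ≤ (∫ z, Real.tanh (β * z * Real.sqrt x + h) ^ 2 ∂(gaussianReal 0 1))
            - h * ∫ z, u0 (β * z * Real.sqrt x + h) ∂(gaussianReal 0 1) := by
            rw [← hsub]; exact hmono
        _ < ∫ z, Real.tanh (β * z * Real.sqrt x + h) ^ 2 ∂(gaussianReal 0 1) := by
            nlinarith [mul_pos hh hIpos]
    apply strictAntiOn_of_deriv_neg (convex_Ioi 0)
    · intro x hx
      have hx' : 0 < x := hx
      exact (((f_hasDerivAt β h hβ hx').div (hasDerivAt_id x) hx'.ne').add_const
        a).continuousAt.continuousWithinAt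
    · intro x hx
      rw [interior_Ioi] at hx
      have hx' : 0 < x := hx
      have hg := ((f_hasDerivAt β h hβ hx').div (hasDerivAt_id x) hx'.ne').add_const a
      have hg2 : HasDerivAt
          (fun y => (∫ z, Real.tanh (β * z * Real.sqrt y + h) ^ 2 ∂(gaussianReal 0 1)) / y + a)
          (((∫ z, β * z / Real.sqrt x * (Real.tanh (β * z * Real.sqrt x + h) *
              (1 - Real.tanh (β * z * Real.sqrt x + h) ^ 2)) ∂(gaussianReal 0 1)) * x -
            (∫ z, Real.tanh (β * z * Real.sqrt x + h) ^ 2 ∂(gaussianReal 0 1)) * 1) / x ^ 2)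
          x := hg
      rw [hg2.deriv]
      apply div_neg_of_neg_of_pos
      · have := key x hx'
        linarith
      · positivity
end

section
/- Let Δ² be symmetric positive definite, Λ, Γ diagonal with positive entries, and β² > 1/ρ(ΓΔ²Λ). Then there exists a vector x ∈ ℝ^m with all entries strictly positive such that xᵀ Λ(β²Δ²ΛΓΔ² − Δ²)Λ x > 0. In fact, taking u the positive unit Perron eigenvector of (ΛΓ)^{1/2}Δ²(ΛΓ)^{1/2} and x = Λ^{−1/2}Γ^{1/2}u gives xᵀΛ(β²Δ²ΛΓΔ² − Δ²)Λx = ρ(ΓΔ²Λ)(β²ρ(ΓΔ²Λ) − 1) > 0. -/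
open Matrix

/-- Spectral radius of a real matrix: largest absolute value of its (complex) eigenvalues. -/
noncomputable def specRad {m : ℕ} (A : Matrix (Fin m) (Fin m) ℝ) : ℝ :=
  sSup {r : ℝ | ∃ μ ∈ spectrum ℂ (A.map (Complex.ofReal)), r = ‖μ‖}

/-!
With `D = (ΛΓ)^{1/2}`, the matrix `ΓΔ²Λ` has the same characteristic polynomial as the symmetric
positive definite matrix `M = DΔ²D`, so `ρ(ΓΔ²Λ)` is the largest eigenvalue `ℓ` of `M`.
If `v` is an eigenvector for `ℓ`, then `|v|ᵀM|v| ≥ vᵀMv = ℓ‖v‖²` because `M` has positive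
entries, while `ℓ • 1 - M` is positive semidefinite; hence `M|v| = ℓ|v|`, and `|v| > 0` since
`M` has positive entries. For `x = Λ⁻¹D|v|` the quadratic form equals
`β²|M|v||² - |v|ᵀM|v| = ℓ‖v‖²(β²ℓ - 1) > 0`.
-/

namespace Matrix

variable {n : Type*} [Fintype n]

theorem dotProduct_mulVec_le_abs {A : Matrix n n ℝ} (hA : ∀ i j, 0 ≤ A i j) (v : n → ℝ) :
    v ⬝ᵥ A *ᵥ v ≤ |v| ⬝ᵥ A *ᵥ |v| := by
  simp only [dotProduct, mulVec, Finset.mul_sum, Pi.abs_apply]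
  refine Finset.sum_le_sum fun i _ => Finset.sum_le_sum fun j _ => ?_
  calc v i * (A i j * v j) ≤ |v i * (A i j * v j)| := le_abs_self _
    _ = |v i| * (A i j * |v j|) := by rw [abs_mul, abs_mul, abs_of_nonneg (hA i j)]

theorem pos_of_mulVec_eq_smul {A : Matrix n n ℝ} (hA : ∀ i j, 0 < A i j) {c : ℝ} {w : n → ℝ}
    (hw : 0 ≤ w) (hw0 : w ≠ 0) (h : A *ᵥ w = c • w) (i : n) : 0 < w i := by
  obtain ⟨j, hj⟩ := Function.ne_iff.mp hw0
  have hAw : 0 < (A *ᵥ w) i :=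
    Finset.sum_pos' (fun k _ => mul_nonneg (hA i k).le (hw k))
      ⟨j, Finset.mem_univ _, mul_pos (hA i j) ((hw j).lt_of_ne' hj)⟩
  rw [h, Pi.smul_apply, smul_eq_mul] at hAw
  exact (hw i).lt_of_ne' (right_ne_zero_of_mul hAw.ne')

theorem dotProduct_mulVec_comm_of_transpose_eq {S : Matrix n n ℝ} (hS : Sᵀ = S) (x y : n → ℝ) :
    x ⬝ᵥ S *ᵥ y = S *ᵥ x ⬝ᵥ y := by
  rw [dotProduct_mulVec, ← mulVec_transpose, hS]

theorem dotProduct_mulVec_congr_form {Δ D Λ Γ : Matrix n n ℝ} (hΔ : Δᵀ = Δ) (hD : Dᵀ = D)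
    (hΛ : Λᵀ = Λ) (hΛΓ : Λ * Γ = D * D) {x w : n → ℝ} (hx : Λ *ᵥ x = D *ᵥ w) (b : ℝ) :
    x ⬝ᵥ (Λ * (b • (Δ * Λ * Γ * Δ) - Δ) * Λ) *ᵥ x
      = b * ((D * Δ * D) *ᵥ w ⬝ᵥ (D * Δ * D) *ᵥ w) - w ⬝ᵥ (D * Δ * D) *ᵥ w := by
  have hMT : (D * Δ * D)ᵀ = D * Δ * D := by
    rw [transpose_mul, transpose_mul, hD, hΔ, Matrix.mul_assoc]
  have hK : Δ * Λ * Γ * Δ = Δ * D * D * Δ := by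
    rw [Matrix.mul_assoc Δ Λ Γ, hΛΓ, ← Matrix.mul_assoc]
  calc x ⬝ᵥ (Λ * (b • (Δ * Λ * Γ * Δ) - Δ) * Λ) *ᵥ x
      = D *ᵥ w ⬝ᵥ (b • (Δ * Λ * Γ * Δ) - Δ) *ᵥ (D *ᵥ w) := by
        rw [← mulVec_mulVec, ← mulVec_mulVec, dotProduct_mulVec_comm_of_transpose_eq hΛ, hx]
    _ = w ⬝ᵥ (b • ((D * Δ * D) * (D * Δ * D)) - D * Δ * D) *ᵥ w := by
        rw [← dotProduct_mulVec_comm_of_transpose_eq hD, mulVec_mulVec, mulVec_mulVec, hK]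
        simp only [Matrix.mul_sub, Matrix.sub_mul, Matrix.mul_smul, Matrix.smul_mul,
          Matrix.mul_assoc]
    _ = b * ((D * Δ * D) *ᵥ w ⬝ᵥ (D * Δ * D) *ᵥ w) - w ⬝ᵥ (D * Δ * D) *ᵥ w := by
        rw [sub_mulVec, smul_mulVec, dotProduct_sub, dotProduct_smul, smul_eq_mul,
          ← mulVec_mulVec, dotProduct_mulVec_comm_of_transpose_eq hMT]

variable [DecidableEq n]

theorem charpoly_mul_mul_eq_of_mul_eq {R : Type*} [CommRing R] {Γ Δ Λ D : Matrix n n R}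
    (h : Λ * Γ = D * D) : (Γ * Δ * Λ).charpoly = (D * Δ * D).charpoly := by
  rw [Matrix.mul_assoc, charpoly_mul_comm, Matrix.mul_assoc, h, ← Matrix.mul_assoc,
    charpoly_mul_comm, ← Matrix.mul_assoc]

open scoped MatrixOrder in
theorem IsHermitian.posSemidef_smul_one_sub {A : Matrix n n ℝ} (hA : A.IsHermitian) {c : ℝ}
    (hc : ∀ i, hA.eigenvalues i ≤ c) : (c • 1 - A).PosSemidef := by
  have hle : A ≤ algebraMap ℝ _ c := (le_algebraMap_iff_spectrum_le hA).2 (by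
    rw [hA.spectrum_real_eq_range_eigenvalues]
    rintro _ ⟨i, rfl⟩
    exact hc i)
  rw [Algebra.algebraMap_eq_smul_one] at hle
  exact le_iff.mp hle

theorem IsHermitian.mulVec_eq_smul_of_le {A : Matrix n n ℝ} (hA : A.IsHermitian) {c : ℝ}
    (hc : ∀ i, hA.eigenvalues i ≤ c) {v : n → ℝ} (hv : c * (v ⬝ᵥ v) ≤ v ⬝ᵥ A *ᵥ v) :
    A *ᵥ v = c • v := by
  have hpsd := hA.posSemidef_smul_one_sub hc
  have hform : star v ⬝ᵥ (c • 1 - A) *ᵥ v = c * (v ⬝ᵥ v) - v ⬝ᵥ A *ᵥ v := by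
    rw [star_trivial, sub_mulVec, smul_mulVec, one_mulVec, dotProduct_sub, dotProduct_smul,
      smul_eq_mul]
  have hzero : star v ⬝ᵥ (c • 1 - A) *ᵥ v = 0 :=
    le_antisymm (by linarith) (hpsd.dotProduct_mulVec_nonneg v)
  rw [hpsd.dotProduct_mulVec_zero_iff, sub_mulVec, smul_mulVec, one_mulVec, sub_eq_zero] at hzero
  exact hzero.symm

theorem IsHermitian.mulVec_abs_eq_smul {A : Matrix n n ℝ} (hA : A.IsHermitian)
    (hnonneg : ∀ i j, 0 ≤ A i j) {c : ℝ} (hc : ∀ i, hA.eigenvalues i ≤ c) {v : n → ℝ}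
    (hv : A *ᵥ v = c • v) : A *ᵥ |v| = c • |v| := by
  refine hA.mulVec_eq_smul_of_le hc ?_
  have habs : |v| ⬝ᵥ |v| = v ⬝ᵥ v :=
    Finset.sum_congr rfl fun i _ => by simp only [Pi.abs_apply, abs_mul_abs_self]
  calc c * (|v| ⬝ᵥ |v|) = v ⬝ᵥ A *ᵥ v := by rw [habs, hv, dotProduct_smul, smul_eq_mul]
    _ ≤ |v| ⬝ᵥ A *ᵥ |v| := dotProduct_mulVec_le_abs hnonneg v

theorem PosDef.diagonal_mul_mul_diagonal {A : Matrix n n ℝ} (hA : A.PosDef) {d : n → ℝ}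
    (hd : ∀ i, 0 < d i) : (diagonal d * A * diagonal d).PosDef := by
  simpa using hA.conjTranspose_mul_mul_same (B := diagonal d)
    (mulVec_injective_iff_isUnit.mpr (PosDef.diagonal hd).isUnit)

theorem IsHermitian.exists_pos_eigenvector [Nonempty n] {A : Matrix n n ℝ} (hA : A.IsHermitian)
    (hpos : ∀ i j, 0 < A i j) :
    ∃ i₀, (∀ i, hA.eigenvalues i ≤ hA.eigenvalues i₀) ∧
      ∃ w : n → ℝ, (∀ i, 0 < w i) ∧ A *ᵥ w = hA.eigenvalues i₀ • w := by
  obtain ⟨i₀, -, hi₀⟩ := Finset.univ.exists_max_image hA.eigenvalues Finset.univ_nonempty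
  have hmax : ∀ i, hA.eigenvalues i ≤ hA.eigenvalues i₀ := fun i => hi₀ i (Finset.mem_univ i)
  set v : n → ℝ := ⇑(hA.eigenvectorBasis i₀)
  have hv0 : |v| ≠ 0 := fun h =>
    hA.eigenvectorBasis.orthonormal.ne_zero i₀ (by ext i; simpa using congrFun h i)
  have hw : A *ᵥ |v| = hA.eigenvalues i₀ • |v| :=
    hA.mulVec_abs_eq_smul (fun i j => (hpos i j).le) hmax (hA.mulVec_eigenvectorBasis i₀)
  exact ⟨i₀, hmax, |v|, pos_of_mulVec_eq_smul hpos (abs_nonneg v) hv0 hw, hw⟩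

theorem spectrum_map_ofReal_of_charpoly_eq {A M : Matrix n n ℝ} (hM : M.IsHermitian)
    (h : A.charpoly = M.charpoly) :
    spectrum ℂ (A.map Complex.ofReal) = Set.range (fun i => (hM.eigenvalues i : ℂ)) := by
  ext z
  rw [mem_spectrum_iff_isRoot_charpoly,
    show A.map Complex.ofReal = A.map Complex.ofRealHom from rfl, charpoly_map, h,
    hM.charpoly_eq, Polynomial.map_prod, Polynomial.IsRoot, Polynomial.eval_prod,
    Finset.prod_eq_zero_iff]
  simp only [Polynomial.eval_sub, Polynomial.eval_X, Polynomial.eval_C, Polynomial.map_sub,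
    Polynomial.map_X, Polynomial.map_C, sub_eq_zero, Finset.mem_univ, true_and, Set.mem_range]
  exact exists_congr fun _ => eq_comm

end Matrix

theorem specRad_eq_of_spectrum_eq_range {m : ℕ} {A : Matrix (Fin m) (Fin m) ℝ} {ev : Fin m → ℝ}
    (h : spectrum ℂ (A.map Complex.ofReal) = Set.range (fun i => (ev i : ℂ)))
    (hev : ∀ i, 0 ≤ ev i) {i₀ : Fin m} (hi₀ : ∀ i, ev i ≤ ev i₀) : specRad A = ev i₀ := by
  have hset : {r : ℝ | ∃ μ ∈ spectrum ℂ (A.map Complex.ofReal), r = ‖μ‖} = Set.range ev := by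
    ext r
    simp [h, Complex.norm_real, abs_of_nonneg (hev _), eq_comm]
  rw [specRad, hset]
  exact IsGreatest.csSup_eq ⟨⟨i₀, rfl⟩, by rintro _ ⟨i, rfl⟩; exact hi₀ i⟩

/-- Above the AT line (`β² > 1/ρ(ΓΔ²Λ)`), there is a strictly positive vector `x` with
`xᵀΛ(β²Δ²ΛΓΔ² − Δ²)Λx > 0`. -/
theorem stmt19 {m : ℕ} (hm : 0 < m) (γ lam : Fin m → ℝ)
    (hγ : ∀ s, 0 < γ s) (hlam : ∀ s, 0 < lam s)
    (Δ2 : Matrix (Fin m) (Fin m) ℝ) (hposdef : Δ2.PosDef) (hpos : ∀ i j, 0 < Δ2 i j)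
    (Γ Λ : Matrix (Fin m) (Fin m) ℝ)
    (hΓ : Γ = Matrix.diagonal γ) (hΛ : Λ = Matrix.diagonal lam)
    (β : ℝ) (hβ : β ^ 2 > 1 / specRad (Γ * Δ2 * Λ)) :
    ∃ x : Fin m → ℝ, (∀ i, 0 < x i) ∧
      0 < x ⬝ᵥ (Λ * (β ^ 2 • (Δ2 * Λ * Γ * Δ2) - Δ2) * Λ).mulVec x := by
  subst hΓ hΛ
  set d : Fin m → ℝ := fun i => √(γ i * lam i)
  have hd : ∀ i, 0 < d i := fun i => Real.sqrt_pos.mpr (mul_pos (hγ i) (hlam i))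
  have hΛΓ : diagonal lam * diagonal γ = diagonal d * diagonal d := by
    simp only [d, diagonal_mul_diagonal, Real.mul_self_sqrt (mul_pos (hγ _) (hlam _)).le,
      mul_comm (lam _)]
  set M := diagonal d * Δ2 * diagonal d
  have hM : M.PosDef := hposdef.diagonal_mul_mul_diagonal hd
  have hMpos : ∀ i j, 0 < M i j := fun i j => by
    simpa [M, diagonal_mul, mul_diagonal] using mul_pos (mul_pos (hd i) (hpos i j)) (hd j)
  have : Nonempty (Fin m) := ⟨⟨0, hm⟩⟩
  obtain ⟨i₀, hi₀, w, hwpos, hw⟩ := hM.1.exists_pos_eigenvector hMpos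
  set l := hM.1.eigenvalues i₀
  have hρ : specRad (diagonal γ * Δ2 * diagonal lam) = l :=
    specRad_eq_of_spectrum_eq_range
      (spectrum_map_ofReal_of_charpoly_eq hM.1 (charpoly_mul_mul_eq_of_mul_eq hΛΓ))
      (fun i => (hM.eigenvalues_pos i).le) hi₀
  rw [hρ, gt_iff_lt, one_div, inv_lt_iff_one_lt_mul₀ (hM.eigenvalues_pos i₀)] at hβ
  refine ⟨fun i => d i / lam i * w i, fun i => mul_pos (div_pos (hd i) (hlam i)) (hwpos i), ?_⟩
  have hx : diagonal lam *ᵥ (fun i => d i / lam i * w i) = diagonal d *ᵥ w := by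
    ext i
    simp only [mulVec_diagonal]
    field_simp [(hlam i).ne']
  have hww : 0 < w ⬝ᵥ w :=
    Finset.sum_pos (fun i _ => mul_pos (hwpos i) (hwpos i)) Finset.univ_nonempty
  rw [dotProduct_mulVec_congr_form (by simpa using hposdef.1.eq) (diagonal_transpose d)
    (diagonal_transpose lam) hΛΓ hx, hw]
  calc 0 < l * (w ⬝ᵥ w) * (β ^ 2 * l - 1) :=
        mul_pos (mul_pos (hM.eigenvalues_pos i₀) hww) (by linarith)
    _ = β ^ 2 * (l • w ⬝ᵥ l • w) - w ⬝ᵥ l • w := by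
        simp only [dotProduct_smul, smul_dotProduct, smul_eq_mul]
        ring
end
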